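/- arXiv:2108.04764 — 2 statements merged into one kernel-verified Lean document; each statement's English description precedes it below -/
import Mathlib

section
/- For r ≥ 3, every edge-forcing set of the butterfly network BF(r) has cardinality at least 2^r. -/
open SimpleGraph

/-- Zero-forcing closure: `ZFForced G S v` means `v` is eventually forced
starting from the initially-forced set `S`. A forced vertex `u` whose neighbors,
with the single exception of `v`, are all forced, forces `v`. -/
inductive ZFForced {V : Type*} (G : SimpleGraph V) (S : Set V) : V → Prop
  | init {v : V} : v ∈ S → ZFForced G S v
  | force {u v : V} : ZFForced G S u → G.Adj u v →
      (∀ w, G.Adj u w → w ≠ v → ZFForced G S w) → ZFForced G S v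

/-- `S` is a zero forcing set of `G` if its closure is all of `V`. -/
def IsZeroForcingSet {V : Type*} (G : SimpleGraph V) (S : Set V) : Prop :=
  ∀ v : V, ZFForced G S v

/-- `K` is an edge-forcing set of `G`: a set of pairwise non-adjacent
(vertex-disjoint) edges of `G` whose endpoint set is a zero forcing set. -/
def IsEdgeForcingSet {V : Type*} (G : SimpleGraph V) (K : Set (Sym2 V)) : Prop :=
  K ⊆ G.edgeSet ∧
  K.Pairwise (fun e f => ∀ v : V, v ∈ e → v ∉ f) ∧
  IsZeroForcingSet G {v : V | ∃ e ∈ K, v ∈ e}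

/-- The edge-forcing number: minimum cardinality of an edge-forcing set. -/
noncomputable def edgeForcingNumber {V : Type*} (G : SimpleGraph V) : ℕ :=
  sInf {n : ℕ | ∃ K : Set (Sym2 V), IsEdgeForcingSet G K ∧ K.ncard = n}

/-- The `r`-dimensional butterfly network: vertices `(w, i)` with
`w : Fin r → Bool` and level `i : Fin (r+1)`; `(w,i)` is adjacent to `(w',i+1)`
iff `w = w'` or `w` and `w'` differ exactly in bit `i+1` (index `i`, 0-based). -/
def butterfly (r : ℕ) : SimpleGraph ((Fin r → Bool) × Fin (r + 1)) :=
  SimpleGraph.fromRel (fun p q =>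
    (p.2 : ℕ) + 1 = (q.2 : ℕ) ∧
      (p.1 = q.1 ∨ ∀ k : Fin r, (p.1 k ≠ q.1 k ↔ (k : ℕ) = (p.2 : ℕ))))

/-!
Twins, i.e. distinct vertices `a`, `b` with the same neighbourhood, can only be forced if one of
them is initially forced: a vertex forcing one of them is adjacent to both, so the other one must
already be forced. In `BF(r)`, flipping bit `0` of `w` turns `(w, 0)` into a twin of it, and
flipping bit `r - 1` does the same for `(w, r)`. Hence the endpoints of an edge-forcing set
contain at least half of the `2 ^ (r + 1)` vertices on levels `0` and `r`. For `r ≥ 2` no two of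
these are adjacent, so each edge covers at most one of them.
-/

section ZeroForcing

variable {V : Type*} {G : SimpleGraph V} {S : Set V}

theorem ZFForced.ne_of_twins {a b v : V} (hv : ZFForced G S v) (hab : a ≠ b)
    (htwin : G.neighborSet a = G.neighborSet b) (ha : a ∉ S) (hb : b ∉ S) :
    v ≠ a ∧ v ≠ b := by
  have hadj : ∀ u, G.Adj u a ↔ G.Adj u b := fun u => by
    simpa only [mem_neighborSet, adj_comm] using Set.ext_iff.mp htwin u
  induction hv with
  | init hv => exact ⟨fun h => ha (h ▸ hv), fun h => hb (h ▸ hv)⟩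
  | @force u v _ huv _ _ ih =>
    constructor
    · rintro rfl
      exact (ih b ((hadj u).1 huv) hab.symm).2 rfl
    · rintro rfl
      exact (ih a ((hadj u).2 huv) hab).1 rfl

theorem IsZeroForcingSet.mem_or_mem_of_twins (hS : IsZeroForcingSet G S) {a b : V}
    (hab : a ≠ b) (htwin : G.neighborSet a = G.neighborSet b) : a ∈ S ∨ b ∈ S := by
  by_contra! h
  exact ((hS a).ne_of_twins hab htwin h.1 h.2).1 rfl

theorem IsZeroForcingSet.ncard_le_two_mul_ncard_inter [Finite V] (hS : IsZeroForcingSet G S)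
    {A : Set V} {τ : V → V} (hτ : Function.Involutive τ) (hA : Set.MapsTo τ A A)
    (hne : ∀ a ∈ A, τ a ≠ a) (htwin : ∀ a ∈ A, G.neighborSet (τ a) = G.neighborSet a) :
    A.ncard ≤ 2 * (A ∩ S).ncard := by
  have hcover : A ⊆ (A ∩ S) ∪ τ '' (A ∩ S) := by
    intro a ha
    rcases hS.mem_or_mem_of_twins (hne a ha) (htwin a ha) with h | h
    · exact Or.inr ⟨τ a, ⟨hA ha, h⟩, hτ a⟩
    · exact Or.inl ⟨ha, h⟩
  calc A.ncard ≤ ((A ∩ S) ∪ τ '' (A ∩ S)).ncard := Set.ncard_le_ncard hcover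
    _ ≤ (A ∩ S).ncard + (τ '' (A ∩ S)).ncard := Set.ncard_union_le _ _
    _ ≤ 2 * (A ∩ S).ncard := by linarith [Set.ncard_image_le (f := τ) (s := A ∩ S)]

theorem SimpleGraph.IsIndepSet.ncard_inter_endpoints_le {A : Set V} (hA : G.IsIndepSet A)
    {K : Set (Sym2 V)} (hK : K ⊆ G.edgeSet) (hKfin : K.Finite) :
    (A ∩ {v | ∃ e ∈ K, v ∈ e}).ncard ≤ K.ncard := by
  obtain h | ⟨v₀, -⟩ := (A ∩ {v | ∃ e ∈ K, v ∈ e}).eq_empty_or_nonempty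
  · simp only [h, Set.ncard_empty, zero_le]
  have : Nonempty (Sym2 V) := ⟨s(v₀, v₀)⟩
  choose! f hfK hvf using fun v (hv : v ∈ A ∩ {v | ∃ e ∈ K, v ∈ e}) => hv.2
  refine Set.ncard_le_ncard_of_injOn f hfK (fun x hx y hy hxy => ?_) hKfin
  by_contra hne
  have hf : f x = s(x, y) := (Sym2.mem_and_mem_iff hne).1 ⟨hvf x hx, hxy ▸ hvf y hy⟩
  exact hA hx.1 hy.1 hne (by simpa only [hf, mem_edgeSet] using hK (hfK x hx))

theorem IsEdgeForcingSet.ncard_le_two_mul_ncard [Finite V] {K : Set (Sym2 V)}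
    (hK : IsEdgeForcingSet G K) {A : Set V} (hAind : G.IsIndepSet A) {τ : V → V}
    (hτ : Function.Involutive τ) (hA : Set.MapsTo τ A A) (hne : ∀ a ∈ A, τ a ≠ a)
    (htwin : ∀ a ∈ A, G.neighborSet (τ a) = G.neighborSet a) :
    A.ncard ≤ 2 * K.ncard :=
  (hK.2.2.ncard_le_two_mul_ncard_inter hτ hA hne htwin).trans
    (Nat.mul_le_mul_left 2 (hAind.ncard_inter_endpoints_le hK.1 (Set.toFinite K)))

end ZeroForcing

def flipBit {r : ℕ} (i : ℕ) (w : Fin r → Bool) : Fin r → Bool :=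
  fun k => if (k : ℕ) = i then !w k else w k

section FlipBit

variable {r : ℕ} {i : ℕ} {w w' : Fin r → Bool}

@[simp]
theorem flipBit_flipBit : flipBit i (flipBit i w) = w := by
  funext k
  by_cases hk : (k : ℕ) = i <;> simp [flipBit, hk]

theorem flipBit_injective : Function.Injective (flipBit (r := r) i) :=
  Function.LeftInverse.injective fun _ => flipBit_flipBit

theorem flipBit_ne_self (hi : i < r) : flipBit i w ≠ w := fun h => by
  simpa [flipBit] using congrFun h ⟨i, hi⟩

theorem eq_flipBit_iff : w' = flipBit i w ↔ w = flipBit i w' :=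
  ⟨fun h => h ▸ flipBit_flipBit.symm, fun h => h ▸ flipBit_flipBit.symm⟩

theorem differ_exactly_iff_eq_flipBit :
    (∀ k : Fin r, (w k ≠ w' k ↔ (k : ℕ) = i)) ↔ w' = flipBit i w := by
  rw [funext_iff]
  refine forall_congr' fun k => ?_
  by_cases hk : (k : ℕ) = i <;> cases hw : w k <;> cases hw' : w' k <;> simp [flipBit, hk, hw]

end FlipBit

theorem butterfly_adj_iff {r : ℕ} {p q : (Fin r → Bool) × Fin (r + 1)} :
    (butterfly r).Adj p q ↔
      ((p.2 : ℕ) + 1 = q.2 ∧ (p.1 = q.1 ∨ q.1 = flipBit p.2 p.1)) ∨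
      ((q.2 : ℕ) + 1 = p.2 ∧ (q.1 = p.1 ∨ p.1 = flipBit q.2 q.1)) := by
  simp only [butterfly, fromRel_adj, differ_exactly_iff_eq_flipBit]
  refine and_iff_right_of_imp fun h hpq => ?_
  subst hpq
  omega

section Butterfly

variable {r : ℕ}

theorem butterfly_neighborSet_flipBit_zero (w : Fin r → Bool) :
    (butterfly r).neighborSet (flipBit 0 w, 0) = (butterfly r).neighborSet (w, 0) := by
  ext ⟨u, l⟩
  simp only [mem_neighborSet, butterfly_adj_iff, Fin.val_zero, Nat.add_eq_zero_iff, one_ne_zero,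
    and_false, false_and, or_false, flipBit_flipBit]
  rw [eq_comm (a := u), eq_comm (a := flipBit 0 w), or_comm]

theorem butterfly_neighborSet_flipBit_last (w : Fin r → Bool) :
    (butterfly r).neighborSet (flipBit (r - 1) w, Fin.last r) =
      (butterfly r).neighborSet (w, Fin.last r) := by
  ext ⟨u, l⟩
  have hlt : r + 1 ≠ l := by omega
  simp only [mem_neighborSet, butterfly_adj_iff, Fin.val_last, hlt, false_and, false_or]
  refine and_congr_right fun hl => ?_
  rw [show (l : ℕ) = r - 1 by omega, flipBit_injective.eq_iff, ← eq_flipBit_iff, or_comm,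
    eq_comm (a := u)]

def butterflyBoundary (r : ℕ) : Set ((Fin r → Bool) × Fin (r + 1)) :=
  Set.univ ×ˢ {0, Fin.last r}

def butterflyTwin (r : ℕ) (v : (Fin r → Bool) × Fin (r + 1)) :
    (Fin r → Bool) × Fin (r + 1) :=
  (flipBit (if v.2 = 0 then 0 else r - 1) v.1, v.2)

theorem butterflyTwin_involutive : Function.Involutive (butterflyTwin r) :=
  fun _ => Prod.ext flipBit_flipBit rfl

theorem mapsTo_butterflyTwin_boundary :
    Set.MapsTo (butterflyTwin r) (butterflyBoundary r) (butterflyBoundary r) :=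
  fun _ hv => ⟨trivial, hv.2⟩

theorem butterflyTwin_ne_self (hr : r ≠ 0) (v : (Fin r → Bool) × Fin (r + 1)) :
    butterflyTwin r v ≠ v := fun h =>
  flipBit_ne_self (by split_ifs <;> omega) (congrArg Prod.fst h)

theorem butterfly_neighborSet_butterflyTwin (hr : r ≠ 0) {v : (Fin r → Bool) × Fin (r + 1)}
    (hv : v ∈ butterflyBoundary r) :
    (butterfly r).neighborSet (butterflyTwin r v) = (butterfly r).neighborSet v := by
  obtain ⟨w, l⟩ := v
  obtain ⟨-, rfl | rfl⟩ := hv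
  · exact butterfly_neighborSet_flipBit_zero w
  · rw [butterflyTwin, if_neg (Fin.val_ne_zero_iff.1 hr)]
    exact butterfly_neighborSet_flipBit_last w

theorem butterfly_isIndepSet_boundary (hr : 2 ≤ r) :
    (butterfly r).IsIndepSet (butterflyBoundary r) := by
  rintro ⟨w, l⟩ ⟨-, hl⟩ ⟨w', l'⟩ ⟨-, hl'⟩ - hadj
  obtain ⟨hlevel, -⟩ | ⟨hlevel, -⟩ := butterfly_adj_iff.1 hadj <;>
    rcases hl with rfl | rfl <;> rcases hl' with rfl | rfl <;>
    simp only [Fin.val_zero, Fin.val_last] at hlevel <;> omega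

theorem ncard_butterflyBoundary (hr : r ≠ 0) : (butterflyBoundary r).ncard = 2 ^ (r + 1) := by
  rw [butterflyBoundary, Set.ncard_prod, Set.ncard_univ,
    Set.ncard_pair (Fin.val_ne_zero_iff.1 hr).symm, pow_succ]
  simp

end Butterfly

theorem edgeForcing_BF_lower_bound (r : ℕ) (hr : 3 ≤ r)
    (K : Set (Sym2 ((Fin r → Bool) × Fin (r + 1))))
    (hK : IsEdgeForcingSet (butterfly r) K) :
    2 ^ r ≤ K.ncard := by
  have hbound := hK.ncard_le_two_mul_ncard (butterfly_isIndepSet_boundary (by omega))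
    butterflyTwin_involutive mapsTo_butterflyTwin_boundary
    (fun v _ => butterflyTwin_ne_self (by omega) v)
    (fun _ hv => butterfly_neighborSet_butterflyTwin (by omega) hv)
  rw [ncard_butterflyBoundary (by omega), pow_succ] at hbound
  omega
end

section
/- For every odd r ≥ 3, the edge-forcing number of the butterfly network BF(r) satisfies ζ_e(BF(r)) ≤ ⌈r/2⌉ · 2^(r-1). -/
open SimpleGraph

/-!
Take the straight edges `(w, i) — (w, i+1)` with `i` even and bit `i` of `w` clear: `(r+1)/2`
layers of `2^(r-1)` disjoint edges. Between levels `i` and `i+1`, every vertex with bit `i`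
clear is initially forced together with its straight neighbour, so as soon as its neighbours on
the far side are forced it forces its cross neighbour. Sweeping upwards from level `0` this
forces every odd level; since `r` is odd, level `r - 1` is even and sweeping back down from it
forces every even level.
-/

theorem edgeForcingNumber_le_ncard {V : Type*} {G : SimpleGraph V} {K : Set (Sym2 V)}
    (hK : IsEdgeForcingSet G K) : edgeForcingNumber G ≤ K.ncard :=
  Nat.sInf_le ⟨K, hK, rfl⟩

theorem eq_or_ne_exactly_at_iff {ι β : Type*} (f g : ι → β) (i : ι) :
    (f = g ∨ ∀ k, (f k ≠ g k ↔ k = i)) ↔ ∀ k ≠ i, f k = g k := by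
  refine ⟨?_, fun h => ?_⟩
  · rintro (rfl | h) k hk
    · rfl
    · exact not_not.1 (mt (h k).1 hk)
  · by_cases hi : f i = g i
    · refine .inl (funext fun k => ?_)
      by_cases hk : k = i
      · exact hk ▸ hi
      · exact h k hk
    · exact .inr fun k => ⟨fun hne => not_not.1 (mt (h k) hne), fun hk => hk ▸ hi⟩

open Finset in
theorem card_filter_even_range (n : ℕ) : #{k ∈ range n | Even k} = (n + 1) / 2 := by
  induction n with
  | zero => rfl
  | succ n ih =>
    rw [range_add_one, filter_insert]
    split_ifs with h <;> rw [Nat.even_iff] at h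
    · rw [card_insert_of_notMem (by simp), ih]
      omega
    · rw [ih]
      omega

theorem Fintype.card_subtype_apply_eq {ι β : Type*} [Fintype ι] [DecidableEq ι] [Fintype β]
    [DecidableEq β] (i : ι) (b : β) :
    Fintype.card {w : ι → β // w i = b} = Fintype.card β ^ (Fintype.card ι - 1) := by
  rw [Fintype.card_subtype, ← Fintype.piFinset_univ,
    Fintype.card_filter_piFinset_const_eq_of_mem _ _ (Finset.mem_univ _)]
  rfl

namespace Butterfly

variable {r : ℕ}

theorem adj_levels {p q : (Fin r → Bool) × Fin (r + 1)} (h : (butterfly r).Adj p q) :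
    (q.2 : ℕ) = p.2 + 1 ∨ (p.2 : ℕ) = q.2 + 1 := by
  rcases h with ⟨-, ⟨h, -⟩ | ⟨h, -⟩⟩ <;> omega

theorem adj_iff_of_levels {i : Fin r} {p q : (Fin r → Bool) × Fin (r + 1)}
    (h : p.2 = i.castSucc ∧ q.2 = i.succ ∨ p.2 = i.succ ∧ q.2 = i.castSucc) :
    (butterfly r).Adj p q ↔ ∀ k ≠ i, p.1 k = q.1 k := by
  wlog hpq : p.2 = i.castSucc ∧ q.2 = i.succ generalizing p q
  · rw [(butterfly r).adj_comm, this (.inl (h.resolve_left hpq).symm) (h.resolve_left hpq).symm]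
    exact forall₂_congr fun _ _ => eq_comm
  obtain ⟨hp, hq⟩ := hpq
  have hne : p ≠ q := fun h => by simp [h, hq, Fin.ext_iff] at hp
  simp only [butterfly, SimpleGraph.fromRel_adj, hp, hq, Fin.val_castSucc, Fin.val_succ,
    Fin.val_inj, ne_eq, hne, not_false_eq_true, true_and]
  exact (or_iff_left fun h => by omega).trans (eq_or_ne_exactly_at_iff _ _ _)

/-- Clearing bit `i` of `w` gives a vertex `(w', a)` of `S` whose neighbours on level `b` are
`(w, b)` and vertices of `S`, so it forces `(w, b)` once its other neighbours are forced. -/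
theorem zfForced_of_rung {S : Set ((Fin r → Bool) × Fin (r + 1))} (i : Fin r) {a b : Fin (r + 1)}
    (hab : a = i.castSucc ∧ b = i.succ ∨ a = i.succ ∧ b = i.castSucc)
    (hS : ∀ w : Fin r → Bool, w i = false → (w, a) ∈ S ∧ (w, b) ∈ S)
    (hfar : ∀ u x, u.2 = a → (butterfly r).Adj u x → x.2 ≠ b → ZFForced (butterfly r) S x)
    (w : Fin r → Bool) : ZFForced (butterfly r) S (w, b) := by
  cases hwi : w i
  · exact .init (hS w hwi).2
  set w' := Function.update w i false
  have hw' : ∀ k ≠ i, w' k = w k := fun k hk => Function.update_of_ne hk _ _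
  refine .force (.init (hS w' (by simp [w'])).1) ((adj_iff_of_levels hab).2 hw') fun x hx hxw => ?_
  by_cases hxb : x.2 = b
  · have hxw' : ∀ k ≠ i, w' k = x.1 k := (adj_iff_of_levels (p := (w', a)) (hxb ▸ hab)).1 hx
    cases hxi : x.1 i
    · exact .init (by simpa [← hxb] using (hS x.1 hxi).2)
    · refine absurd (Prod.ext (funext fun k => ?_) hxb) hxw
      by_cases hk : k = i
      · exact hk ▸ hxi.trans hwi.symm
      · exact (hxw' k hk).symm.trans (hw' k hk)
  · exact hfar _ x rfl hx hxb

section Sweep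

variable {S : Set ((Fin r → Bool) × Fin (r + 1))}
  (hS : ∀ i : Fin r, Even (i : ℕ) → ∀ w : Fin r → Bool, w i = false →
    (w, i.castSucc) ∈ S ∧ (w, i.succ) ∈ S)
include hS

theorem zfForced_of_odd_level (n : ℕ) :
    ∀ x : (Fin r → Bool) × Fin (r + 1), (x.2 : ℕ) = 2 * n + 1 →
      ZFForced (butterfly r) S x := by
  induction n using Nat.strong_induction_on with | _ n ih
  intro x hx
  let i : Fin r := ⟨2 * n, by omega⟩
  have hfar : ∀ u y, u.2 = i.castSucc → (butterfly r).Adj u y → y.2 ≠ i.succ →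
      ZFForced (butterfly r) S y := by
    intro u y hu hadj hy
    have hu' : (u.2 : ℕ) = 2 * n := congrArg Fin.val hu
    rcases adj_levels hadj with h | h
    · exact absurd (Fin.ext (by rw [h, hu']; rfl)) hy
    · exact ih (n - 1) (by omega) y (by omega)
  rw [show x = (x.1, i.succ) from Prod.ext rfl (Fin.ext hx)]
  exact zfForced_of_rung i (.inl ⟨rfl, rfl⟩) (hS i ⟨n, two_mul n⟩) hfar x.1

theorem zfForced_of_even_level (hodd : Odd r) (n : ℕ) :
    ∀ x : (Fin r → Bool) × Fin (r + 1), (x.2 : ℕ) + 2 * n + 1 = r →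
      ZFForced (butterfly r) S x := by
  obtain ⟨m, rfl⟩ := hodd
  induction n using Nat.strong_induction_on with | _ n ih
  intro x hx
  let i : Fin (2 * m + 1) := ⟨x.2, by omega⟩
  have hfar : ∀ u y, u.2 = i.succ → (butterfly (2 * m + 1)).Adj u y → y.2 ≠ i.castSucc →
      ZFForced (butterfly (2 * m + 1)) S y := by
    intro u y hu hadj hy
    have hu' : (u.2 : ℕ) = x.2 + 1 := congrArg Fin.val hu
    rcases adj_levels hadj with h | h
    · exact ih (n - 1) (by omega) y (by omega)
    · exact absurd (Fin.ext (show (y.2 : ℕ) = x.2 by omega)) hy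
  rw [show x = (x.1, i.castSucc) from rfl]
  exact zfForced_of_rung i (.inr ⟨rfl, rfl⟩)
    (fun w hw => (hS i ⟨m - n, show (x.2 : ℕ) = m - n + (m - n) by omega⟩ w hw).symm) hfar x.1

theorem isZeroForcingSet_of_rungs (hodd : Odd r) : IsZeroForcingSet (butterfly r) S := by
  intro x
  obtain ⟨m, rfl⟩ := hodd
  rcases Nat.even_or_odd' (x.2 : ℕ) with ⟨n, hn | hn⟩
  · exact zfForced_of_even_level hS ⟨m, rfl⟩ (m - n) x (by omega)
  · exact zfForced_of_odd_level hS n x hn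

end Sweep

def rung (i : Fin r) (w : Fin r → Bool) : Sym2 ((Fin r → Bool) × Fin (r + 1)) :=
  s((w, i.castSucc), (w, i.succ))

def evenRungs (r : ℕ) : Set (Sym2 ((Fin r → Bool) × Fin (r + 1))) :=
  (fun p : Fin r × (Fin r → Bool) => rung p.1 p.2) '' {p | Even (p.1 : ℕ) ∧ p.2 p.1 = false}

theorem rung_injective :
    Function.Injective fun p : Fin r × (Fin r → Bool) => rung p.1 p.2 := by
  rintro ⟨i, w⟩ ⟨j, w'⟩ h
  rcases Sym2.eq_iff.1 h with ⟨h₁, -⟩ | ⟨h₁, h₂⟩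
  · simp_all [Fin.castSucc_inj]
  · simp only [Prod.mk.injEq, Fin.ext_iff, Fin.val_castSucc, Fin.val_succ] at h₁ h₂
    omega

theorem eq_of_mem_rung_of_mem_rung {i j : Fin r} (hi : Even (i : ℕ)) (hj : Even (j : ℕ))
    {w w' : Fin r → Bool} {v : (Fin r → Bool) × Fin (r + 1)} (hvi : v ∈ rung i w)
    (hvj : v ∈ rung j w') : i = j ∧ w = w' := by
  obtain ⟨a, ha⟩ := hi
  obtain ⟨b, hb⟩ := hj
  simp only [rung, Sym2.mem_iff] at hvi hvj
  rcases hvi with rfl | rfl <;> rcases hvj with h | h <;>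
    simp only [Prod.mk.injEq, Fin.ext_iff, Fin.val_castSucc, Fin.val_succ] at h <;>
    exact ⟨Fin.ext (by omega), h.1⟩

theorem evenRungs_subset_edgeSet : evenRungs r ⊆ (butterfly r).edgeSet := by
  rintro _ ⟨⟨i, w⟩, -, rfl⟩
  exact (adj_iff_of_levels (.inl ⟨rfl, rfl⟩)).2 fun _ _ => rfl

theorem evenRungs_pairwise_disjoint :
    (evenRungs r).Pairwise fun e f => ∀ v, v ∈ e → v ∉ f := by
  rintro _ ⟨⟨i, w⟩, ⟨hi, -⟩, rfl⟩ _ ⟨⟨j, w'⟩, ⟨hj, -⟩, rfl⟩ hne v hvi hvj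
  obtain ⟨rfl, rfl⟩ := eq_of_mem_rung_of_mem_rung hi hj hvi hvj
  exact hne rfl

theorem isEdgeForcingSet_evenRungs (hodd : Odd r) : IsEdgeForcingSet (butterfly r) (evenRungs r) :=
  ⟨evenRungs_subset_edgeSet, evenRungs_pairwise_disjoint, isZeroForcingSet_of_rungs
    (fun i hi w hw => ⟨⟨rung i w, ⟨(i, w), ⟨hi, hw⟩, rfl⟩, Sym2.mem_mk_left _ _⟩,
      ⟨rung i w, ⟨(i, w), ⟨hi, hw⟩, rfl⟩, Sym2.mem_mk_right _ _⟩⟩) hodd⟩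

theorem ncard_evenRungs : (evenRungs r).ncard = (r + 1) / 2 * 2 ^ (r - 1) := by
  rw [evenRungs, Set.ncard_image_of_injective _ rung_injective, Set.ncard_eq_toFinset_card',
    Set.toFinset_ofPred, ← Fintype.card_subtype, Fintype.card_congr
      (Equiv.subtypeProdEquivSigmaSubtype fun (i : Fin r) (w : Fin r → Bool) =>
        Even (i : ℕ) ∧ w i = false), Fintype.card_sigma]
  have hfiber (i : Fin r) : Fintype.card {w : Fin r → Bool // Even (i : ℕ) ∧ w i = false} =
      if Even (i : ℕ) then 2 ^ (r - 1) else 0 := by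
    split_ifs with hi
    · simpa [hi] using Fintype.card_subtype_apply_eq i false
    · simp [hi]
  rw [Fintype.sum_congr _ _ hfiber,
    Fin.sum_univ_eq_sum_range (fun k => if Even k then 2 ^ (r - 1) else 0),
    ← Finset.sum_filter, Finset.sum_const, card_filter_even_range, smul_eq_mul]

end Butterfly

theorem edgeForcing_BF_odd_upper_bound_general (r : ℕ) (hodd : Odd r) :
    edgeForcingNumber (butterfly r) ≤ (r + 1) / 2 * 2 ^ (r - 1) :=
  calc edgeForcingNumber (butterfly r)
      ≤ (Butterfly.evenRungs r).ncard :=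
        edgeForcingNumber_le_ncard (Butterfly.isEdgeForcingSet_evenRungs hodd)
    _ = (r + 1) / 2 * 2 ^ (r - 1) := Butterfly.ncard_evenRungs

theorem edgeForcing_BF_odd_upper_bound (r : ℕ) (hodd : Odd r) (hr : 3 ≤ r) :
    edgeForcingNumber (butterfly r) ≤ (r + 1) / 2 * 2 ^ (r - 1) :=
  edgeForcing_BF_odd_upper_bound_general r hodd
end
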